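/- arXiv:1509.03046 — 2 statements merged into one kernel-verified Lean document; each statement's English description precedes it below -/
import Mathlib

section
/- For every symmetric measurable kernel W : [0,1]^2 → [-1,1], the cut norm ‖W‖_□ = sup over measurable sets S, T ⊆ [0,1] of |∫_{S×T} W(x,y) dx dy| satisfies ‖W‖_□ ≥ (1/4) · t*(C4,W), where t*(C4,W) is the homomorphism density of the 4-cycle in W. -/
/-!
Integrating out `x₄` turns `t(C₄, W)` into `∫ x₁, B_{x₁}`, where `B_{x₁}` is the bilinear form of `W`
evaluated at the `[-1, 1]`-valued functions `W x₁ ·` and `∫ x₄, W · x₄ * W x₄ x₁`. Such a form is at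
most `4 ‖W‖_□`: against a fixed `h`, the extremal `[-1, 1]`-valued test function is the sign of `h`,
so each of the two test functions can be traded for indicators of two sets at a cost of a factor `2`.
-/

open MeasureTheory

noncomputable section

def I01 : Set ℝ := Set.Icc 0 1

/-- The cut norm of a kernel on `[0,1]^2`. -/
def cutNorm (W : ℝ → ℝ → ℝ) : ℝ :=
  sSup {c : ℝ | ∃ S T : Set ℝ, MeasurableSet S ∧ MeasurableSet T ∧
    S ⊆ I01 ∧ T ⊆ I01 ∧ c = |∫ x in S, ∫ y in T, W x y|}

open Set

local notation "μ₀" => volume.restrict I01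

theorem measurableSet_I01 : MeasurableSet I01 := measurableSet_Icc

theorem volume_I01 : volume I01 = 1 := by simp [I01, Real.volume_Icc]

instance : IsProbabilityMeasure μ₀ :=
  ⟨by rw [Measure.restrict_apply_univ, volume_I01]⟩

theorem abs_integral_mul_le_two_mul {α : Type*} [MeasurableSpace α] {μ : Measure α}
    {f h : α → ℝ} {c : ℝ} (hf : ∀ᵐ x ∂μ, |f x| ≤ 1)
    (hh : Integrable h μ) (hhm : Measurable h)
    (hc : ∀ S, MeasurableSet S → |∫ x in S, h x ∂μ| ≤ c) :
    |∫ x, f x * h x ∂μ| ≤ 2 * c := by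
  have hpos := le_abs_self (∫ x in {x | 0 ≤ h x}, h x ∂μ) |>.trans
    (hc _ (measurableSet_le measurable_const hhm))
  have hneg := neg_abs_le (∫ x in {x | h x ≤ 0}, h x ∂μ) |>.trans'
    (neg_le_neg (hc _ (measurableSet_le hhm measurable_const)))
  calc |∫ x, f x * h x ∂μ| ≤ ∫ x, |f x * h x| ∂μ := abs_integral_le_integral_abs
    _ ≤ ∫ x, ‖h x‖ ∂μ := by
        refine integral_mono_of_nonneg (ae_of_all _ fun _ => abs_nonneg _) hh.norm ?_
        filter_upwards [hf] with x hx
        rw [abs_mul, Real.norm_eq_abs]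
        exact mul_le_of_le_one_left (abs_nonneg _) hx
    _ = ∫ x in {x | 0 ≤ h x}, h x ∂μ - ∫ x in {x | h x ≤ 0}, h x ∂μ :=
        integral_norm_eq_pos_sub_neg hh
    _ ≤ 2 * c := by linarith

theorem integral_integral_swap_of_abs_le {α β : Type*} [MeasurableSpace α] [MeasurableSpace β]
    {μ : Measure α} {ν : Measure β} [IsFiniteMeasure μ] [IsFiniteMeasure ν] {F : α → β → ℝ}
    {C : ℝ} (hF : Measurable fun p : α × β => F p.1 p.2) (hb : ∀ x y, |F x y| ≤ C) :
    ∫ x, ∫ y, F x y ∂ν ∂μ = ∫ y, ∫ x, F x y ∂μ ∂ν :=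
  integral_integral_swap
    (Integrable.of_bound hF.aestronglyMeasurable C (ae_of_all _ fun p => hb p.1 p.2))

section CutNorm

variable {W : ℝ → ℝ → ℝ} {C : ℝ}

theorem abs_setIntegral_le_of_subset_I01 {S : Set ℝ} (hS : S ⊆ I01) {F : ℝ → ℝ}
    (hF : ∀ x, |F x| ≤ C) : |∫ x in S, F x| ≤ C := by
  have hC : 0 ≤ C := (abs_nonneg _).trans (hF 0)
  have hvol : volume.real S ≤ 1 :=
    (measureReal_mono hS (by simp [volume_I01])).trans_eq (by simp [measureReal_def, volume_I01])
  calc |∫ x in S, F x| ≤ C * volume.real S := (Real.norm_eq_abs _).symm.trans_le <|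
        norm_setIntegral_le_of_norm_le_const
          ((measure_mono (μ := volume) hS).trans_lt (by simp [volume_I01]))
          fun x _ => hF x
    _ ≤ C := mul_le_of_le_one_right hC hvol

theorem bddAbove_cutNorm (hbd : ∀ x y, |W x y| ≤ C) :
    BddAbove {c : ℝ | ∃ S T : Set ℝ, MeasurableSet S ∧ MeasurableSet T ∧
      S ⊆ I01 ∧ T ⊆ I01 ∧ c = |∫ x in S, ∫ y in T, W x y|} := by
  refine ⟨C, ?_⟩
  rintro _ ⟨S, T, -, -, hS, hT, rfl⟩
  exact abs_setIntegral_le_of_subset_I01 hS fun x => abs_setIntegral_le_of_subset_I01 hT (hbd x)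

theorem abs_setIntegral_setIntegral_le_cutNorm (hbd : ∀ x y, |W x y| ≤ C) {S T : Set ℝ}
    (hS : MeasurableSet S) (hT : MeasurableSet T) :
    |∫ x in S, ∫ y in T, W x y ∂μ₀ ∂μ₀| ≤ cutNorm W := by
  rw [Measure.restrict_restrict hS, Measure.restrict_restrict hT]
  exact le_csSup (bddAbove_cutNorm hbd) ⟨S ∩ I01, T ∩ I01, hS.inter measurableSet_I01,
    hT.inter measurableSet_I01, inter_subset_right, inter_subset_right, rfl⟩

theorem abs_integral_integral_mul_le_four_mul_cutNorm
    (hmeas : Measurable fun p : ℝ × ℝ => W p.1 p.2) (hbd : ∀ x y, |W x y| ≤ C)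
    {f g : ℝ → ℝ} (hg : Measurable g) (hf1 : ∀ x, |f x| ≤ 1) (hg1 : ∀ y, |g y| ≤ 1) :
    |∫ x in I01, ∫ y in I01, f x * g y * W x y| ≤ 4 * cutNorm W := by
  have hgW : Measurable fun p : ℝ × ℝ => g p.2 * W p.1 p.2 := (hg.comp measurable_snd).mul hmeas
  have hgW_le : ∀ x y, |g y * W x y| ≤ C := fun x y => by
    rw [abs_mul]; exact mul_le_of_le_one_left (abs_nonneg _) (hg1 y) |>.trans (hbd x y)
  have hcol_meas (S : Set ℝ) : Measurable fun y => ∫ x in S, W x y ∂μ₀ :=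
    (hmeas.comp measurable_swap).stronglyMeasurable.integral_prod_right'.measurable
  have hcol_le (S : Set ℝ) (y : ℝ) : |∫ x in S, W x y ∂μ₀| ≤ C := by
    rw [Measure.restrict_restrict' measurableSet_I01]
    exact abs_setIntegral_le_of_subset_I01 inter_subset_right fun x => hbd x y
  have hrow_setIntegral (S : Set ℝ) (hS : MeasurableSet S) :
      |∫ x in S, ∫ y, g y * W x y ∂μ₀ ∂μ₀| ≤ 2 * cutNorm W := by
    rw [integral_integral_swap_of_abs_le hgW hgW_le]
    simp_rw [integral_const_mul]
    refine abs_integral_mul_le_two_mul (ae_of_all _ hg1)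
      (Integrable.of_bound (hcol_meas S).aestronglyMeasurable C (ae_of_all _ (hcol_le S)))
      (hcol_meas S)
      fun T hT => ?_
    rw [← integral_integral_swap_of_abs_le hmeas hbd]
    exact abs_setIntegral_setIntegral_le_cutNorm hbd hS hT
  have hrow_meas : Measurable fun x => ∫ y in I01, g y * W x y :=
    hgW.stronglyMeasurable.integral_prod_right'.measurable
  calc |∫ x in I01, ∫ y in I01, f x * g y * W x y|
      = |∫ x in I01, f x * ∫ y in I01, g y * W x y| := by simp_rw [mul_assoc, integral_const_mul]
    _ ≤ 2 * (2 * cutNorm W) :=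
        abs_integral_mul_le_two_mul (ae_of_all _ hf1)
          (Integrable.of_bound hrow_meas.aestronglyMeasurable C
            (ae_of_all _ fun x => abs_setIntegral_le_of_subset_I01 subset_rfl (hgW_le x)))
          hrow_meas hrow_setIntegral
    _ = 4 * cutNorm W := by ring

end CutNorm

theorem cutNorm_ge_quarter_c4_density_general (W : ℝ → ℝ → ℝ)
    (hmeas : Measurable fun p : ℝ × ℝ => W p.1 p.2)
    (hbd : ∀ x y, W x y ∈ Set.Icc (-1 : ℝ) 1) :
    (1 / 4) * (∫ x1 in I01, ∫ x2 in I01, ∫ x3 in I01, ∫ x4 in I01,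
        W x1 x2 * W x2 x3 * W x3 x4 * W x4 x1) ≤ cutNorm W := by
  have habs : ∀ x y, |W x y| ≤ 1 := fun x y => abs_le.mpr (hbd x y)
  set U : ℝ → ℝ → ℝ := fun z x => ∫ w in I01, W z w * W w x with hU
  have hU_le (z x : ℝ) : |U z x| ≤ 1 := abs_setIntegral_le_of_subset_I01 subset_rfl fun w => by
    rw [abs_mul]; exact mul_le_one₀ (habs z w) (abs_nonneg _) (habs w x)
  have hUm (x : ℝ) : Measurable fun z => U z x :=
    (hmeas.mul (hmeas.comp (measurable_snd.prodMk measurable_const))).stronglyMeasurable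
      |>.integral_prod_right'.measurable
  have hslice (x1 : ℝ) : |∫ x2 in I01, ∫ x3 in I01, ∫ x4 in I01,
      W x1 x2 * W x2 x3 * W x3 x4 * W x4 x1| ≤ 4 * cutNorm W := by
    have hx4 (x2 x3 : ℝ) : ∫ x4 in I01, W x1 x2 * W x2 x3 * W x3 x4 * W x4 x1
        = W x1 x2 * U x3 x1 * W x2 x3 := by
      rw [show W x1 x2 * U x3 x1 * W x2 x3 = W x1 x2 * W x2 x3 * U x3 x1 by ring, hU,
        ← integral_const_mul]
      simp_rw [mul_assoc]
    simp_rw [hx4]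
    exact abs_integral_integral_mul_le_four_mul_cutNorm hmeas habs (hUm x1) (habs x1) (hU_le · x1)
  have hdensity := norm_integral_le_of_norm_le_const (μ := μ₀)
    (ae_of_all _ fun x1 => (Real.norm_eq_abs _).trans_le (hslice x1))
  rw [probReal_univ, mul_one, Real.norm_eq_abs] at hdensity
  linarith [le_abs_self (∫ x1 in I01, ∫ x2 in I01, ∫ x3 in I01, ∫ x4 in I01,
    W x1 x2 * W x2 x3 * W x3 x4 * W x4 x1)]

theorem cutNorm_ge_quarter_c4_density (W : ℝ → ℝ → ℝ)
    (hmeas : Measurable fun p : ℝ × ℝ => W p.1 p.2)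
    (hsym : ∀ x y, W x y = W y x)
    (hbd : ∀ x y, W x y ∈ Set.Icc (-1 : ℝ) 1) :
    (1 / 4) * (∫ x1 in I01, ∫ x2 in I01, ∫ x3 in I01, ∫ x4 in I01,
        W x1 x2 * W x2 x3 * W x3 x4 * W x4 x1) ≤ cutNorm W :=
  cutNorm_ge_quarter_c4_density_general W hmeas hbd
end
end

section
/- Let W : [0,1]^2 → [-1,1] be a symmetric measurable kernel and f : [0,1] → [0,1] measurable. Then (∫∫∫ f(y) f(z) W(x,y) W(x,z) dx dy dz)^2 ≤ t*(C4,W), where t*(C4,W) = ∫_{[0,1]^4} W(x1,x2)W(x2,x3)W(x3,x4)W(x4,x1) dx. -/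
open MeasureTheory

noncomputable section

/-!
Write `(W ∘ W)(y, z) = ∫ W(y, x) W(x, z) dx` for the codegree kernel. By Fubini and the symmetry
of `W`, the left-hand side is `(∫∫ f(y) f(z) (W ∘ W)(y, z) dy dz)²` and `t(C₄, W)` is
`∫∫ (W ∘ W)(y, z)² dy dz`. Cauchy–Schwarz on the probability space of pairs `(y, z)`, in the form
`(∫ h)² ≤ ∫ h²` (the variance of `h` is nonnegative), and `|f(y) f(z)| ≤ 1` compare the two.
-/

open ProbabilityTheory Function

theorem norm_mul_le_one_of_le_one {R : Type*} [NonUnitalSeminormedRing R] {a b : R}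
    (ha : ‖a‖ ≤ 1) (hb : ‖b‖ ≤ 1) : ‖a * b‖ ≤ 1 :=
  (norm_mul_le a b).trans (mul_le_one₀ ha (norm_nonneg b) hb)

variable {α β γ : Type*} [MeasurableSpace α] [MeasurableSpace β] [MeasurableSpace γ]
  {μ : Measure α} {ν : Measure β} {ρ : Measure γ}

namespace MeasureTheory

theorem sq_integral_le_integral_sq [IsProbabilityMeasure μ] {X : α → ℝ} (hX : MemLp X 2 μ) :
    (∫ a, X a ∂μ) ^ 2 ≤ ∫ a, X a ^ 2 ∂μ := by
  have h := variance_nonneg X μ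
  rw [variance_eq_sub hX, sub_nonneg] at h
  exact h

theorem integral_integral_swap_of_norm_le [IsFiniteMeasure μ] [IsFiniteMeasure ν]
    {F : α → β → ℝ} (hF : Measurable (uncurry F)) {C : ℝ} (hC : ∀ a b, ‖F a b‖ ≤ C) :
    ∫ a, ∫ b, F a b ∂ν ∂μ = ∫ b, ∫ a, F a b ∂μ ∂ν :=
  integral_integral_swap <|
    Integrable.of_bound hF.aestronglyMeasurable C (ae_of_all _ fun p => hC p.1 p.2)

theorem integral_integral_integral_rotate [IsFiniteMeasure μ] [IsFiniteMeasure ν]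
    [IsFiniteMeasure ρ] {F : α → β → γ → ℝ}
    (hF : Measurable fun p : α × β × γ => F p.1 p.2.1 p.2.2) {C : ℝ}
    (hC : ∀ a b c, ‖F a b c‖ ≤ C) :
    ∫ a, ∫ b, ∫ c, F a b c ∂ρ ∂ν ∂μ = ∫ b, ∫ c, ∫ a, F a b c ∂μ ∂ρ ∂ν := by
  have hinner : Measurable (uncurry fun a b => ∫ c, F a b c ∂ρ) :=
    (hF.comp (by fun_prop : Measurable fun q : (α × β) × γ => (q.1.1, q.1.2, q.2))
      ).stronglyMeasurable.integral_prod_right'.measurable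
  calc ∫ a, ∫ b, ∫ c, F a b c ∂ρ ∂ν ∂μ = ∫ b, ∫ a, ∫ c, F a b c ∂ρ ∂μ ∂ν :=
        integral_integral_swap_of_norm_le hinner (C := C * ρ.real Set.univ) fun a b =>
          norm_integral_le_of_norm_le_const (ae_of_all _ fun c => hC a b c)
    _ = ∫ b, ∫ c, ∫ a, F a b c ∂μ ∂ρ ∂ν := by
        refine integral_congr_ae (ae_of_all _ fun b => ?_)
        exact integral_integral_swap_of_norm_le
          (hF.comp (by fun_prop : Measurable fun q : α × γ => (q.1, b, q.2))) fun a c => hC a b c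

theorem sq_integral_integral_mul_le [IsProbabilityMeasure μ] [IsProbabilityMeasure ν]
    {h g : α → β → ℝ} (hh : Measurable (uncurry h)) (hg : Measurable (uncurry g))
    (hh1 : ∀ a b, ‖h a b‖ ≤ 1) {C : ℝ} (hgC : ∀ a b, ‖g a b‖ ≤ C) :
    (∫ a, ∫ b, h a b * g a b ∂ν ∂μ) ^ 2 ≤ ∫ a, ∫ b, g a b ^ 2 ∂ν ∂μ := by
  have hhg : ∀ p : α × β, ‖h p.1 p.2 * g p.1 p.2‖ ≤ 1 * C := fun p => by
    rw [norm_mul]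
    exact mul_le_mul (hh1 _ _) (hgC _ _) (norm_nonneg _) zero_le_one
  have hg2 : ∀ p : α × β, ‖g p.1 p.2 ^ 2‖ ≤ C ^ 2 := fun p => by
    rw [norm_pow]
    exact pow_le_pow_left₀ (norm_nonneg _) (hgC _ _) 2
  have hhgm : Measurable fun p : α × β => h p.1 p.2 * g p.1 p.2 := hh.mul hg
  have hg2m : Measurable fun p : α × β => g p.1 p.2 ^ 2 := hg.pow_const 2
  rw [← integral_prod _ (Integrable.of_bound hhgm.aestronglyMeasurable _ (ae_of_all _ hhg)),
    ← integral_prod _ (Integrable.of_bound hg2m.aestronglyMeasurable _ (ae_of_all _ hg2))]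
  calc (∫ p, h p.1 p.2 * g p.1 p.2 ∂μ.prod ν) ^ 2
      ≤ ∫ p, (h p.1 p.2 * g p.1 p.2) ^ 2 ∂μ.prod ν :=
        sq_integral_le_integral_sq
          (MemLp.of_bound hhgm.aestronglyMeasurable _ (ae_of_all _ hhg))
    _ ≤ ∫ p, g p.1 p.2 ^ 2 ∂μ.prod ν := by
        refine integral_mono_of_nonneg (ae_of_all _ fun p => sq_nonneg _)
          (Integrable.of_bound hg2m.aestronglyMeasurable _ (ae_of_all _ hg2))
          (ae_of_all _ fun p => ?_)
        have : h p.1 p.2 ^ 2 ≤ 1 := (sq_le_one_iff_abs_le_one _).2 (hh1 _ _)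
        exact (mul_pow _ _ 2).trans_le (mul_le_of_le_one_left (sq_nonneg _) this)

end MeasureTheory

namespace Graphon

def kernelComp (μ : Measure α) (U V : α → α → ℝ) (x y : α) : ℝ :=
  ∫ z, U x z * V z y ∂μ

theorem measurable_kernelComp [SFinite μ] {U V : α → α → ℝ} (hU : Measurable (uncurry U))
    (hV : Measurable (uncurry V)) : Measurable (uncurry (kernelComp μ U V)) :=
  (by fun_prop : Measurable fun q : (α × α) × α => U q.1.1 q.2 * V q.2 q.1.2
    ).stronglyMeasurable.integral_prod_right'.measurable

theorem norm_kernelComp_le_one [IsProbabilityMeasure μ] {U V : α → α → ℝ}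
    (hU : ∀ x y, ‖U x y‖ ≤ 1) (hV : ∀ x y, ‖V x y‖ ≤ 1) (x y : α) :
    ‖kernelComp μ U V x y‖ ≤ 1 := by
  simpa [kernelComp] using norm_integral_le_of_norm_le_const (μ := μ) (C := 1)
    (ae_of_all _ fun z => norm_mul_le_one_of_le_one (hU x z) (hV z y))

theorem kernelComp_self_comm {W : α → α → ℝ} (hW : ∀ x y, W x y = W y x) (x y : α) :
    kernelComp μ W W x y = kernelComp μ W W y x := by
  unfold kernelComp
  congr 1 with z
  rw [hW x z, hW z y, mul_comm]

def cycleFourDensity (μ : Measure α) (W : α → α → ℝ) : ℝ :=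
  ∫ x₁, ∫ x₂, ∫ x₃, ∫ x₄, W x₁ x₂ * W x₂ x₃ * W x₃ x₄ * W x₄ x₁ ∂μ ∂μ ∂μ ∂μ

theorem cycleFourDensity_eq_integral_kernelComp_mul [IsProbabilityMeasure μ]
    {W : α → α → ℝ} (hW : Measurable (uncurry W)) (hW1 : ∀ x y, ‖W x y‖ ≤ 1) :
    cycleFourDensity μ W = ∫ x, ∫ y, kernelComp μ W W x y * kernelComp μ W W y x ∂μ ∂μ := by
  refine integral_congr_ae (ae_of_all _ fun x₁ => ?_)
  have hcomp := measurable_kernelComp (μ := μ) hW hW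
  calc ∫ x₂, ∫ x₃, ∫ x₄, W x₁ x₂ * W x₂ x₃ * W x₃ x₄ * W x₄ x₁ ∂μ ∂μ ∂μ
      = ∫ x₂, ∫ x₃, W x₁ x₂ * W x₂ x₃ * kernelComp μ W W x₃ x₁ ∂μ ∂μ := by
        simp only [mul_assoc, kernelComp, ← integral_const_mul]
    _ = ∫ x₃, ∫ x₂, W x₁ x₂ * W x₂ x₃ * kernelComp μ W W x₃ x₁ ∂μ ∂μ :=
        integral_integral_swap_of_norm_le (C := 1) (by fun_prop) fun x₂ x₃ =>
          norm_mul_le_one_of_le_one (norm_mul_le_one_of_le_one (hW1 _ _) (hW1 _ _))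
            (norm_kernelComp_le_one hW1 hW1 _ _)
    _ = ∫ x₃, kernelComp μ W W x₁ x₃ * kernelComp μ W W x₃ x₁ ∂μ := by
        simp only [kernelComp, integral_mul_const]

theorem cycleFourDensity_eq_integral_kernelComp_sq [IsProbabilityMeasure μ]
    {W : α → α → ℝ} (hW : Measurable (uncurry W)) (hWsymm : ∀ x y, W x y = W y x)
    (hW1 : ∀ x y, ‖W x y‖ ≤ 1) :
    cycleFourDensity μ W = ∫ x, ∫ y, kernelComp μ W W x y ^ 2 ∂μ ∂μ := by
  rw [cycleFourDensity_eq_integral_kernelComp_mul hW hW1]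
  refine integral_congr_ae (ae_of_all _ fun x => integral_congr_ae (ae_of_all _ fun y => ?_))
  dsimp only
  rw [kernelComp_self_comm hWsymm y x, ← sq]

theorem integral_integral_integral_eq_integral_integral_kernelComp [IsProbabilityMeasure μ]
    {W : α → α → ℝ} (hW : Measurable (uncurry W)) (hWsymm : ∀ x y, W x y = W y x)
    (hW1 : ∀ x y, ‖W x y‖ ≤ 1)
    {f : α → ℝ} (hf : Measurable f) (hf1 : ∀ x, ‖f x‖ ≤ 1) :
    ∫ x, ∫ y, ∫ z, f y * f z * W x y * W x z ∂μ ∂μ ∂μ =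
      ∫ y, ∫ z, f y * f z * kernelComp μ W W y z ∂μ ∂μ := by
  rw [integral_integral_integral_rotate (C := 1) (by fun_prop) fun x y z =>
    norm_mul_le_one_of_le_one (norm_mul_le_one_of_le_one (norm_mul_le_one_of_le_one
      (hf1 y) (hf1 z)) (hW1 x y)) (hW1 x z)]
  refine integral_congr_ae (ae_of_all _ fun y => integral_congr_ae (ae_of_all _ fun z => ?_))
  simp only [kernelComp, ← integral_const_mul, hWsymm _ y]
  congr 1 with x
  ring

end Graphon

theorem second_cauchy_schwarz_step (W : ℝ → ℝ → ℝ)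
    (hmeas : Measurable fun p : ℝ × ℝ => W p.1 p.2)
    (hsym : ∀ x y, W x y = W y x)
    (hbd : ∀ x y, W x y ∈ Set.Icc (-1 : ℝ) 1)
    (f : ℝ → ℝ) (hf : Measurable f) (hfb : ∀ x, f x ∈ Set.Icc (0 : ℝ) 1) :
    (∫ x in I01, ∫ y in I01, ∫ z in I01, f y * f z * W x y * W x z) ^ 2 ≤
      ∫ x1 in I01, ∫ x2 in I01, ∫ x3 in I01, ∫ x4 in I01,
        W x1 x2 * W x2 x3 * W x3 x4 * W x4 x1 := by
  have : IsProbabilityMeasure (volume.restrict I01) := ⟨by simp [I01]⟩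
  have hW1 : ∀ x y, ‖W x y‖ ≤ 1 := fun x y => abs_le.2 (hbd x y)
  have hf1 : ∀ x, ‖f x‖ ≤ 1 := fun x => abs_le.2 ⟨by linarith [(hfb x).1], (hfb x).2⟩
  rw [Graphon.integral_integral_integral_eq_integral_integral_kernelComp hmeas hsym hW1 hf hf1]
  show _ ≤ Graphon.cycleFourDensity _ W
  rw [Graphon.cycleFourDensity_eq_integral_kernelComp_sq hmeas hsym hW1]
  exact sq_integral_integral_mul_le (by fun_prop) (Graphon.measurable_kernelComp hmeas hmeas)
    (fun y z => norm_mul_le_one_of_le_one (hf1 y) (hf1 z))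
    (Graphon.norm_kernelComp_le_one hW1 hW1)
end
end
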